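/- arXiv:1808.03291 — 5 statements merged into one kernel-verified Lean document; each statement's English description precedes it below -/
import Mathlib

section
/- The element w = [a,b]·b = a⁻¹b⁻¹abb of the free group F(a,b) satisfies Θ(w) = (0,1) but w is not quasi-positive. Hence non-negativity of the abelianization does not characterize quasi-positivity. -/
/-- Quasi-positive: a (possibly empty) product of conjugates of generators. -/
def QuasiPositive {X : Type*} (w : FreeGroup X) : Prop :=
  ∃ l : List (X × FreeGroup X),
    w = (l.map fun p => p.2⁻¹ * FreeGroup.of p.1 * p.2).prod

/-- The abelianization map `Θ : F(X) → ℤ^X`. -/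
noncomputable def Theta {X : Type*} [DecidableEq X] :
    FreeGroup X →* Multiplicative (X → ℤ) :=
  FreeGroup.lift fun x => Multiplicative.ofAdd (Pi.single x 1)

/-- The generator `a` of the free group on two generators. -/
def a : FreeGroup Bool := FreeGroup.of true

/-- The generator `b` of the free group on two generators. -/
def b : FreeGroup Bool := FreeGroup.of false

/-- Total exponent sum homomorphism. -/
noncomputable def E : FreeGroup Bool →* Multiplicative ℤ :=
  FreeGroup.lift fun _ => Multiplicative.ofAdd 1

/-- Exponent sum of `a`. -/
noncomputable def Ea : FreeGroup Bool →* Multiplicative ℤ :=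
  FreeGroup.lift fun x => if x then Multiplicative.ofAdd 1 else 1

/-- A test homomorphism to `S₃`: `a ↦ (0 1)`, `b ↦ (0 1 2)`. -/
noncomputable def φ : FreeGroup Bool →* Equiv.Perm (Fin 3) :=
  FreeGroup.lift fun x => if x then Equiv.swap 0 1 else Equiv.swap 0 1 * Equiv.swap 1 2

theorem abelianization_not_complete_invariant :
    Multiplicative.toAdd (Theta (a⁻¹ * b⁻¹ * a * b * b)) true = 0 ∧
    Multiplicative.toAdd (Theta (a⁻¹ * b⁻¹ * a * b * b)) false = 1 ∧
    ¬ QuasiPositive (a⁻¹ * b⁻¹ * a * b * b) := by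
  refine ⟨by simp [Theta, a, b, Pi.single_apply], by simp [Theta, a, b, Pi.single_apply], ?_⟩
  rintro ⟨l, hl⟩
  -- the total exponent sum of the word is 1, and each conjugate contributes 1,
  -- so the list has length 1
  have hfac : ∀ p : Bool × FreeGroup Bool,
      E (p.2⁻¹ * FreeGroup.of p.1 * p.2) = Multiplicative.ofAdd 1 := by
    intro p
    have : Multiplicative.toAdd (E (p.2⁻¹ * FreeGroup.of p.1 * p.2)) = 1 := by
      simp [E]
    simpa using congrArg Multiplicative.ofAdd this
  have hEw : E (a⁻¹ * b⁻¹ * a * b * b) = Multiplicative.ofAdd 1 := by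
    have : Multiplicative.toAdd (E (a⁻¹ * b⁻¹ * a * b * b)) = 1 := by simp [E, a, b]
    simpa using congrArg Multiplicative.ofAdd this
  have hlen : l.length = 1 := by
    have h1 : E (a⁻¹ * b⁻¹ * a * b * b)
        = Multiplicative.ofAdd (l.length : ℤ) := by
      rw [hl, map_list_prod, List.map_map]
      have : (l.map (E ∘ fun p => p.2⁻¹ * FreeGroup.of p.1 * p.2))
          = List.replicate l.length (Multiplicative.ofAdd (1 : ℤ)) := by
        rw [List.eq_replicate_iff]
        refine ⟨by simp, ?_⟩
        intro x hx
        obtain ⟨p, _, rfl⟩ := List.mem_map.mp hx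
        exact hfac p
      rw [this, List.prod_replicate]
      simp [← ofAdd_nsmul]
    rw [hEw] at h1
    have := Multiplicative.ofAdd.injective h1.symm
    exact_mod_cast this
  obtain ⟨p, rfl⟩ := List.length_eq_one_iff.mp hlen
  simp only [List.map_cons, List.map_nil, List.prod_cons, List.prod_nil, mul_one] at hl
  cases hx : p.1 with
  | true =>
    -- exponent sum of `a` would be 1, but it is 0
    have h0 : Multiplicative.toAdd (Ea (a⁻¹ * b⁻¹ * a * b * b)) = 0 := by simp [Ea, a, b]
    rw [hl, hx] at h0
    simp [Ea] at h0
  | false =>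
    -- image in S₃: the word maps to 1, but a conjugate of a 3-cycle is not 1
    have h1 : φ (a⁻¹ * b⁻¹ * a * b * b) = 1 := by
      simp only [φ, a, b, map_mul, map_inv, FreeGroup.lift_apply_of, if_true, if_false]
      decide
    rw [hl, hx] at h1
    have hb' : φ (FreeGroup.of false) = Equiv.swap 0 1 * Equiv.swap 1 2 := by
      simp [φ]
    rw [map_mul, map_mul, map_inv, hb'] at h1
    have : Equiv.swap 0 1 * Equiv.swap 1 2 = (1 : Equiv.Perm (Fin 3)) := by
      have := congrArg (fun g => φ p.2 * g * (φ p.2)⁻¹) h1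
      simpa [mul_assoc] using this
    exact absurd this (by decide)
end

section
/- For every k ≥ 1 and j ≥ 0, the element [a,b]^k b^j of the free group F(a,b) is not quasi-positive. -/
/-!
Send `a` to the shift `f ↦ f (· + 1)` and `b` to `f ↦ f + δ₀` on `ℤ → ℤ` (the generators
of `ℤ ≀ ℤ`). Every image then acts as `f ↦ f (· + m) + q`; conjugation keeps `m` and, when
`m = 0`, merely translates `q`. So conjugates of `a` act with `m = 1`, conjugates of `b` with
`m = 0` and `q ≥ 0`, and every quasi-positive element acts with `m > 0`, or `m = 0` and `q ≥ 0`.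
But `[a,b]^k b^j` acts with `m = 0` and `q = k (δ₀ - δ₁) + j δ₀`, which is `-k < 0` at `1`.
-/

open Equiv

section ShiftAdd

variable {G A : Type*} [AddCommGroup G] [AddCommGroup A]

def IsShiftAdd (e : Perm (G → A)) (m : G) (q : G → A) : Prop :=
  ∀ f n, e f n = f (n + m) + q n

def shiftPerm (m : G) : Perm (G → A) :=
  (Equiv.addRight m).symm.arrowCongr (Equiv.refl A)

theorem isShiftAdd_shiftPerm (m : G) : IsShiftAdd (shiftPerm m : Perm (G → A)) m 0 :=
  fun f n => by simp [shiftPerm]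

theorem isShiftAdd_addRight (q : G → A) : IsShiftAdd (Equiv.addRight q) 0 q :=
  fun f n => by simp

namespace IsShiftAdd

variable {e g : Perm (G → A)} {m m' : G} {q q' : G → A}

theorem one : IsShiftAdd (1 : Perm (G → A)) 0 0 := fun f n => by simp

theorem mul (hg : IsShiftAdd g m q) (he : IsShiftAdd e m' q') :
    IsShiftAdd (g * e) (m + m') (fun n => q' (n + m) + q n) := by
  intro f n
  rw [Perm.mul_apply, hg, he, add_assoc, add_assoc]

theorem inv (h : IsShiftAdd e m q) : IsShiftAdd e⁻¹ (-m) (fun n => -q (n - m)) := by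
  intro f n
  have hinv : e⁻¹ f = fun n => f (n - m) - q (n - m) := by
    rw [Perm.inv_def, Equiv.symm_apply_eq]
    funext n
    rw [h]
    simp
  simp [hinv, sub_eq_add_neg]

theorem conj (hg : IsShiftAdd g m q) (he : IsShiftAdd e m' q') :
    IsShiftAdd (g⁻¹ * e * g) m' (fun n => q' (n - m) + (q (n - m + m') - q (n - m))) := by
  intro f n
  rw [mul_assoc, hg.inv.mul (he.mul hg)]
  abel_nf

theorem pow (h : IsShiftAdd e 0 q) (k : ℕ) : IsShiftAdd (e ^ k) 0 (k • q) := by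
  induction k with
  | zero => simpa using one
  | succ k ih =>
    intro f n
    rw [pow_succ, (ih.mul h) f n]
    simp [succ_nsmul, add_comm]

end IsShiftAdd

theorem IsShiftAdd.unique {e : Perm (G → G)} {m m' : G} {q q' : G → G}
    (h : IsShiftAdd e m q) (h' : IsShiftAdd e m' q') : m = m' ∧ q = q' := by
  have hq : q = q' := funext fun n => by simpa using (h 0 n).symm.trans (h' 0 n)
  refine ⟨?_, hq⟩
  simpa [hq] using (h id 0).symm.trans (h' id 0)

theorem isShiftAdd_commutator (m : G) (q : G → A) :
    IsShiftAdd ((shiftPerm m)⁻¹ * (Equiv.addRight q)⁻¹ * shiftPerm m * Equiv.addRight q) 0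
      (fun n => q n - q (n - m)) := by
  intro f n
  simp [shiftPerm, Perm.mul_apply, Perm.inv_def, ← sub_eq_add_neg, add_sub_assoc]

end ShiftAdd

theorem QuasiPositive.map_mem {X M : Type*} [Monoid M] {w : FreeGroup X}
    (hw : QuasiPositive w) (f : FreeGroup X →* M) (S : Submonoid M)
    (hS : ∀ x g, f (g⁻¹ * FreeGroup.of x * g) ∈ S) : f w ∈ S := by
  obtain ⟨l, rfl⟩ := hw
  rw [map_list_prod, List.map_map]
  exact S.list_prod_mem fun y hy => by
    obtain ⟨p, -, rfl⟩ := List.mem_map.mp hy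
    exact hS p.1 p.2

def shiftAddCone : Submonoid (Perm (ℤ → ℤ)) where
  carrier := {e | ∃ m q, IsShiftAdd e m q ∧ (0 < m ∨ m = 0 ∧ 0 ≤ q)}
  one_mem' := ⟨0, 0, IsShiftAdd.one, Or.inr ⟨rfl, le_rfl⟩⟩
  mul_mem' := by
    rintro g e ⟨m, q, hg, hmq⟩ ⟨m', q', he, hmq'⟩
    refine ⟨_, _, hg.mul he, ?_⟩
    rcases hmq with hm | ⟨rfl, hq⟩ <;> rcases hmq' with hm' | ⟨rfl, hq'⟩
    · exact Or.inl (by omega)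
    · exact Or.inl (by omega)
    · exact Or.inl (by omega)
    · exact Or.inr ⟨rfl, fun n => add_nonneg (hq' _) (hq n)⟩

theorem conj_mem_shiftAddCone {g e : Perm (ℤ → ℤ)} {m : ℤ} {q : ℤ → ℤ}
    (hg : IsShiftAdd g m q) (he : e ∈ shiftAddCone) : g⁻¹ * e * g ∈ shiftAddCone := by
  obtain ⟨m', q', he, hmq'⟩ := he
  refine ⟨_, _, hg.conj he, ?_⟩
  rcases hmq' with hm' | ⟨rfl, hq'⟩
  · exact Or.inl hm'
  · exact Or.inr ⟨rfl, fun n => by simpa using hq' (n - m)⟩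

theorem notMem_shiftAddCone {e : Perm (ℤ → ℤ)} {q : ℤ → ℤ} (he : IsShiftAdd e 0 q)
    {n : ℤ} (hn : q n < 0) : e ∉ shiftAddCone := by
  rintro ⟨m, q', he', hmq'⟩
  obtain ⟨rfl, rfl⟩ := he.unique he'
  rcases hmq' with h | ⟨-, hq⟩
  · exact h.false
  · exact (hn.trans_le (hq n)).false

def wreathRep : FreeGroup Bool →* Perm (ℤ → ℤ) :=
  FreeGroup.lift fun x => cond x (shiftPerm 1) (Equiv.addRight (Pi.single 0 1))

theorem wreathRep_a : wreathRep a = shiftPerm 1 := FreeGroup.lift_apply_of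

theorem wreathRep_b : wreathRep b = Equiv.addRight (Pi.single 0 1) := FreeGroup.lift_apply_of

theorem wreathRep_generator_mem_shiftAddCone (x : Bool) :
    wreathRep (FreeGroup.of x) ∈ shiftAddCone := by
  cases x
  · exact ⟨0, _, wreathRep_b ▸ isShiftAdd_addRight _,
      Or.inr ⟨rfl, Pi.single_nonneg.mpr zero_le_one⟩⟩
  · exact ⟨1, 0, wreathRep_a ▸ isShiftAdd_shiftPerm 1, Or.inl one_pos⟩

theorem exists_isShiftAdd_wreathRep (w : FreeGroup Bool) :
    ∃ m q, IsShiftAdd (wreathRep w) m q := by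
  induction w using FreeGroup.induction_on with
  | C1 => exact ⟨0, 0, IsShiftAdd.one⟩
  | of x =>
    obtain ⟨m, q, h, -⟩ := wreathRep_generator_mem_shiftAddCone x
    exact ⟨m, q, h⟩
  | inv_of x ih =>
    obtain ⟨m, q, h⟩ := ih
    exact ⟨_, _, (map_inv wreathRep _).symm ▸ h.inv⟩
  | mul x y ihx ihy =>
    obtain ⟨m, q, hx⟩ := ihx
    obtain ⟨m', q', hy⟩ := ihy
    exact ⟨_, _, (map_mul wreathRep _ _).symm ▸ hx.mul hy⟩

theorem wreathRep_conj_mem_shiftAddCone (x : Bool) (g : FreeGroup Bool) :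
    wreathRep (g⁻¹ * FreeGroup.of x * g) ∈ shiftAddCone := by
  obtain ⟨m, q, hg⟩ := exists_isShiftAdd_wreathRep g
  rw [map_mul, map_mul, map_inv]
  exact conj_mem_shiftAddCone hg (wreathRep_generator_mem_shiftAddCone x)

theorem commutator_power_times_b_power_not_quasiPositive :
    ∀ k j : ℕ, 1 ≤ k → ¬ QuasiPositive ((a⁻¹ * b⁻¹ * a * b) ^ k * b ^ j) := by
  intro k j hk hqp
  set δ : ℤ → ℤ := Pi.single 0 1
  have hb : IsShiftAdd (wreathRep b) 0 δ := wreathRep_b ▸ isShiftAdd_addRight δ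
  have hcomm : IsShiftAdd (wreathRep (a⁻¹ * b⁻¹ * a * b)) 0 (fun n => δ n - δ (n - 1)) := by
    simpa only [map_mul, map_inv, wreathRep_a, wreathRep_b] using isShiftAdd_commutator 1 δ
  have hw := (map_pow wreathRep _ k ▸ hcomm.pow k).mul (map_pow wreathRep b j ▸ hb.pow j)
  rw [← map_mul] at hw
  refine notMem_shiftAddCone hw (n := 1) ?_
    (hqp.map_mem wreathRep _ wreathRep_conj_mem_shiftAddCone)
  simpa [δ] using Nat.lt_of_succ_le hk
end

section
/- For every k ≥ 2, the element ab[a,b]^k b^{k-2} of the free group F(a,b) is not quasi-positive. -/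
/-!
Let `F(a, b)` act on `ℝ` by lifts of circle homeomorphisms, `a` by a map `F ≥ id - 1` and `b` by a
map `G ≥ id`. Lifts commute with integer translations, so every conjugate of `a` is still
`≥ id - 1` and every conjugate of `b` is still `≥ id`; hence a quasi-positive word with
`a`-exponent sum `n` moves no point down by more than `n`. The word `ab[a,b]^k b^(k-2)` has
`a`-exponent sum `1`. For the piecewise-linear `F`, `G` below, `G 0 = 1/2`, `F (1/2) = 3/8`,
`G (-3/4) = 3/8` and `F (-1) = -3/4`, so `[a,b]` sends `0` to `-1` and `[a,b]^k` sends `0` to `-k`;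
the word then moves `x = G^(-(k-2)) 0` to `3/8 - k`, and the slow growth of `G^(k-2)` near `3/8`
forces `x > 11/8 - k`, i.e. `x` is moved down by more than `1`.
-/

open Set Int

theorem strictMono_floor_add_comp_fract {h : ℝ → ℝ} (hmono : StrictMonoOn h (Icc 0 1))
    (h1 : h 1 = h 0 + 1) : StrictMono fun x : ℝ => ⌊x⌋ + h (fract x) := by
  intro x y hxy
  have hx : fract x ∈ Icc (0 : ℝ) 1 := ⟨fract_nonneg x, (fract_lt_one x).le⟩
  have hy : fract y ∈ Icc (0 : ℝ) 1 := ⟨fract_nonneg y, (fract_lt_one y).le⟩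
  rcases (floor_mono hxy.le).eq_or_lt with hfloor | hfloor
  · have : fract x < fract y := by rw [fract, fract, hfloor]; linarith
    simp only [hfloor, add_lt_add_iff_left]
    exact hmono hx hy this
  · have hfloor' : (⌊x⌋ : ℝ) + 1 ≤ ⌊y⌋ := by exact_mod_cast hfloor
    have : h (fract x) < h 1 := hmono hx ⟨zero_le_one, le_rfl⟩ (fract_lt_one x)
    have : h 0 ≤ h (fract y) := hmono.monotoneOn ⟨le_rfl, zero_le_one⟩ hy (fract_nonneg y)
    dsimp only
    linarith

theorem continuous_floor_add_comp_fract {h : ℝ → ℝ} (hcont : ContinuousOn h (Icc 0 1))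
    (h1 : h 1 = h 0 + 1) : Continuous fun x : ℝ => ⌊x⌋ + h (fract x) := by
  have : Continuous ((fun t => h t - t) ∘ fract) :=
    (hcont.sub continuousOn_id).comp_fract'' (by simp [h1])
  convert continuous_id.add this using 1 with x
  ext x
  simp only [Pi.add_apply, Function.comp_apply, id]
  rw [fract]
  ring

namespace CircleDeg1Lift

noncomputable def extendIcc (h : ℝ → ℝ) (hmono : StrictMonoOn h (Icc 0 1))
    (hcont : ContinuousOn h (Icc 0 1)) (h1 : h 1 = h 0 + 1) : CircleDeg1Liftˣ :=
  let f : CircleDeg1Lift :=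
    { toFun x := ⌊x⌋ + h (fract x)
      monotone' := (strictMono_floor_add_comp_fract hmono h1).monotone
      map_add_one' x := by simp [floor_add_one, fract_add_one]; ring }
  (isUnit_iff_bijective.2 ⟨(strictMono_floor_add_comp_fract hmono h1).injective,
    f.continuous_iff_surjective.1 (continuous_floor_add_comp_fract hcont h1)⟩).unit

section extendIcc

variable {h : ℝ → ℝ} {hmono : StrictMonoOn h (Icc 0 1)} {hcont : ContinuousOn h (Icc 0 1)}
  {h1 : h 1 = h 0 + 1}

theorem extendIcc_apply (x : ℝ) : extendIcc h hmono hcont h1 x = ⌊x⌋ + h (fract x) := rfl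

theorem extendIcc_apply_of_mem_Ico {x : ℝ} (hx : x ∈ Ico 0 1) :
    extendIcc h hmono hcont h1 x = h x := by
  rw [extendIcc_apply, floor_eq_zero_iff.2 hx, fract_eq_self.2 hx, cast_zero, zero_add]

theorem sub_le_extendIcc_apply {c : ℝ} (hc : ∀ t ∈ Ico 0 1, t - c ≤ h t) (x : ℝ) :
    x - c ≤ extendIcc h hmono hcont h1 x := by
  have := hc (fract x) ⟨fract_nonneg x, fract_lt_one x⟩
  rw [extendIcc_apply]
  linarith [floor_add_fract x]

end extendIcc

theorem sub_int_le_conj_apply {f g : CircleDeg1Liftˣ} {n : ℤ} (hg : ∀ x, x - n ≤ g x) (x : ℝ) :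
    x - n ≤ (f⁻¹ * g * f) x :=
  calc x - n = (f⁻¹ : CircleDeg1Liftˣ) (f x - n) := by rw [map_sub_int, units_inv_apply_apply]
    _ ≤ (f⁻¹ * g * f) x := (↑f⁻¹ : CircleDeg1Lift).mono (hg (f x))

end CircleDeg1Lift

theorem QuasiPositive.sub_le_apply {X : Type*} (φ : FreeGroup X →* CircleDeg1Liftˣ)
    (ε : FreeGroup X →* Multiplicative ℤ)
    (hε : ∀ s x, x - (ε (FreeGroup.of s)).toAdd ≤ φ (FreeGroup.of s) x) {w : FreeGroup X}
    (hw : QuasiPositive w) (x : ℝ) : x - (ε w).toAdd ≤ φ w x := by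
  obtain ⟨l, rfl⟩ := hw
  induction l generalizing x with
  | nil => simp
  | cons p l ih =>
    set w := (l.map fun p => p.2⁻¹ * FreeGroup.of p.1 * p.2).prod
    have hconj := CircleDeg1Lift.sub_int_le_conj_apply (f := φ p.2) (hε p.1) (φ w x)
    rw [List.map_cons, List.prod_cons, ε.map_mul, ε.map_mul, ε.map_mul, ε.map_inv,
      inv_mul_cancel_comm, toAdd_mul, Int.cast_add, φ.map_mul, Units.val_mul,
      CircleDeg1Lift.mul_apply]
    rw [← φ.map_inv, ← φ.map_mul, ← φ.map_mul] at hconj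
    linarith [ih x]

open CircleDeg1Lift

noncomputable def profileA (t : ℝ) : ℝ := max (t / 4 + 1 / 4) (7 * t / 4 - 1 / 2)

noncomputable def profileB (t : ℝ) : ℝ := min (7 * t / 2 + 1 / 2) (t / 6 + 4 / 3)

theorem strictMono_profileA : StrictMono profileA := fun _ _ hxy ↦
  max_lt ((by linarith : _ < _).trans_le (le_max_left _ _))
    ((by linarith : _ < _).trans_le (le_max_right _ _))

theorem strictMono_profileB : StrictMono profileB := fun _ _ hxy ↦
  lt_min ((min_le_left _ _).trans_lt (by linarith)) ((min_le_right _ _).trans_lt (by linarith))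

noncomputable def liftA : CircleDeg1Liftˣ :=
  extendIcc profileA (strictMono_profileA.strictMonoOn _)
    (by unfold profileA; fun_prop : Continuous _).continuousOn (by norm_num [profileA])

noncomputable def liftB : CircleDeg1Liftˣ :=
  extendIcc profileB (strictMono_profileB.strictMonoOn _)
    (by unfold profileB; fun_prop : Continuous _).continuousOn (by norm_num [profileB])

theorem liftA_half : liftA (1 / 2) = 3 / 8 := by
  rw [liftA, extendIcc_apply_of_mem_Ico (by norm_num)]
  norm_num [profileA]

theorem liftA_neg_one : liftA (-1) = -3 / 4 := by
  rw [show (-1 : ℝ) = 0 - (1 : ℤ) by norm_num, map_sub_int, liftA,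
    extendIcc_apply_of_mem_Ico (by norm_num)]
  norm_num [profileA]

theorem liftB_zero : liftB 0 = 1 / 2 := by
  rw [liftB, extendIcc_apply_of_mem_Ico (by norm_num)]
  norm_num [profileB]

theorem liftB_neg : liftB (-3 / 4) = 3 / 8 := by
  rw [show (-3 / 4 : ℝ) = 1 / 4 - (1 : ℤ) by norm_num, map_sub_int, liftB,
    extendIcc_apply_of_mem_Ico (by norm_num)]
  norm_num [profileB]

theorem sub_one_le_liftA_apply (x : ℝ) : x - 1 ≤ liftA x :=
  sub_le_extendIcc_apply (fun t ht ↦ le_max_of_le_left (by linarith [ht.2])) x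

theorem le_liftB_apply (x : ℝ) : x ≤ liftB x := by
  have : x - 0 ≤ liftB x :=
    sub_le_extendIcc_apply (fun t ht ↦ le_min (by linarith [ht.1]) (by linarith [ht.2])) x
  rwa [sub_zero] at this

theorem liftB_pow_apply_lt (m : ℕ) : (liftB ^ m) (3 / 8) < m + 1 := by
  have hmono := (toOrderIso (liftB ^ m)).strictMono
  have hzero := iterate_le_of_map_le_add_int (m := 1) _ (by rw [liftB_zero]; norm_num) m
  calc (liftB ^ m) (3 / 8) < (liftB ^ m) (0 + (1 : ℤ)) := hmono (by norm_num)
    _ ≤ m + 1 := by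
      rw [map_add_int, Units.val_pow_eq_pow_val, coe_pow]
      push_cast at hzero ⊢
      linarith

noncomputable def circleRep : FreeGroup Bool →* CircleDeg1Liftˣ :=
  FreeGroup.lift fun s ↦ cond s liftA liftB

def aExponentSum : FreeGroup Bool →* Multiplicative ℤ :=
  FreeGroup.lift fun s ↦ Multiplicative.ofAdd (cond s 1 0)

theorem circleRep_a : circleRep a = liftA := FreeGroup.lift_apply_of

theorem circleRep_b : circleRep b = liftB := FreeGroup.lift_apply_of

theorem sub_aExponentSum_le_circleRep_of (s : Bool) (x : ℝ) :
    x - (aExponentSum (FreeGroup.of s)).toAdd ≤ circleRep (FreeGroup.of s) x := by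
  cases s
  · rw [← b, circleRep_b]
    simpa [aExponentSum, b] using le_liftB_apply x
  · rw [← a, circleRep_a]
    simpa [aExponentSum, a] using sub_one_le_liftA_apply x

theorem aExponentSum_word (k m : ℕ) :
    (aExponentSum (a * b * (a⁻¹ * b⁻¹ * a * b) ^ k * b ^ m)).toAdd = 1 := by
  simp [aExponentSum, a, b]

theorem circleRep_commutator_apply_zero : circleRep (a⁻¹ * b⁻¹ * a * b) 0 = -1 := by
  have hB : (liftB⁻¹ : CircleDeg1Liftˣ) (3 / 8) = -3 / 4 := by
    rw [← liftB_neg, units_inv_apply_apply]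
  have hA : (liftA⁻¹ : CircleDeg1Liftˣ) (-3 / 4) = -1 := by
    rw [← liftA_neg_one, units_inv_apply_apply]
  simp only [map_mul, map_inv, circleRep_a, circleRep_b, Units.val_mul, mul_apply]
  rw [liftB_zero, liftA_half, hB, hA]

theorem circleRep_commutator_pow_apply_zero (k : ℕ) :
    circleRep ((a⁻¹ * b⁻¹ * a * b) ^ k) 0 = -k := by
  have := iterate_eq_of_map_eq_add_int (circleRep (a⁻¹ * b⁻¹ * a * b) : CircleDeg1Lift)
    (m := -1) (by rw [circleRep_commutator_apply_zero]; norm_num) k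
  rw [map_pow, Units.val_pow_eq_pow_val, coe_pow, this]
  simp

theorem circleRep_word_apply_zero (k : ℕ) :
    circleRep (a * b * (a⁻¹ * b⁻¹ * a * b) ^ k) 0 = 3 / 8 - k := by
  simp only [map_mul, Units.val_mul, mul_apply, circleRep_a, circleRep_b]
  rw [circleRep_commutator_pow_apply_zero, ← zero_sub, map_sub_nat, liftB_zero, map_sub_nat,
    liftA_half]

theorem ab_commutator_k_b_k_sub_two_not_quasiPositive :
    ∀ k : ℕ, 2 ≤ k →
      ¬ QuasiPositive (a * b * (a⁻¹ * b⁻¹ * a * b) ^ k * b ^ (k - 2)) := by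
  intro k hk hqp
  obtain ⟨m, rfl⟩ := Nat.exists_eq_add_of_le' hk
  rw [Nat.add_sub_cancel] at hqp
  set x := ((liftB ^ m)⁻¹ : CircleDeg1Liftˣ) 0
  have hbound := hqp.sub_le_apply circleRep aExponentSum sub_aExponentSum_le_circleRep_of x
  rw [aExponentSum_word, map_mul, Units.val_mul, mul_apply, map_pow, circleRep_b,
    units_apply_inv_apply, circleRep_word_apply_zero] at hbound
  have hmono : (liftB ^ m) x ≤ (liftB ^ m) (3 / 8 - (m + 1 : ℕ)) :=
    mono _ (by push_cast at hbound ⊢; linarith)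
  rw [map_sub_nat, units_apply_inv_apply, Nat.cast_succ] at hmono
  linarith [liftB_pow_apply_lt m]
end

section
/- Suppose w = y₁⋯y_n with each y_i ∈ X ∪ X⁻¹, w is quasi-positive (or w = 1 in F(X)), and some y_i ∈ X⁻¹. Then there exists an index j such that, writing the cyclic rotation y_i ⋯ y_n y_1 ⋯ y_{i-1} = y_i w_L y_j w_R with y_j = y_i⁻¹, both w_L and w_R are quasi-positive elements of F(X). -/
/-!
More generally, if a word `ρ` represents `a * x * b` with `a`, `b` quasi-positive, then `ρ` has a
letter `x` with quasi-positive prefix and suffix. Write `a⁻¹` and `b⁻¹` as words `A`, `M` that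
concatenate blocks `c⁻¹ y⁻¹ c`, so that `A ρ M` represents `x`. Any word representing `x` has a
letter `x` whose prefix and suffix are trivial. If it lies in `ρ` we are done. Otherwise it lies
in the conjugator of a block `c⁻¹ y⁻¹ c`, and the block can be traded for a block
`c'⁻¹ y⁻¹ c'` with `c'` a proper piece of `c`, placed at the far left of `A` or the far right of
`M`: `A ρ M` still represents `x` and has become shorter. The theorem is the case `a = 1`, after
rotating the word, which conjugates its value.
-/

theorem List.append_eq_append_cons {α : Type*} {U V G₀ G₁ : List α} {m : α}
    (h : U ++ V = G₀ ++ m :: G₁) :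
    (∃ U₁, U = G₀ ++ m :: U₁ ∧ G₁ = U₁ ++ V) ∨ ∃ V₀, V = V₀ ++ m :: G₁ ∧ G₀ = U ++ V₀ := by
  rcases List.append_eq_append_iff.mp h with ⟨V₀, hG₀, hV⟩ | ⟨_ | ⟨m', U₁⟩, hU, hG₁⟩
  · exact .inr ⟨V₀, hV, hG₀⟩
  · exact .inr ⟨[], by simpa using hG₁.symm, by simpa using hU.symm⟩
  · obtain ⟨rfl, rfl⟩ := List.cons_eq_cons.mp hG₁
    exact .inl ⟨U₁, hU, rfl⟩

theorem List.flatMap_eq_append_cons {α β : Type*} {f : β → List α} {L : List β}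
    {G₀ G₁ : List α} {m : α} (h : L.flatMap f = G₀ ++ m :: G₁) :
    ∃ L₁ b L₂ B₀ B₁, L = L₁ ++ b :: L₂ ∧ f b = B₀ ++ m :: B₁ ∧
      G₀ = L₁.flatMap f ++ B₀ ∧ G₁ = B₁ ++ L₂.flatMap f := by
  induction L generalizing G₀ with
  | nil => simp at h
  | cons b L ih =>
    rcases List.append_eq_append_cons (List.flatMap_cons ▸ h) with
      ⟨B₁, hb, rfl⟩ | ⟨V₀, hV, rfl⟩
    · exact ⟨[], b, L, G₀, B₁, rfl, hb, by simp, rfl⟩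
    · obtain ⟨L₁, b', L₂, B₀, B₁, rfl, hb', rfl, rfl⟩ := ih hV
      exact ⟨b :: L₁, b', L₂, B₀, B₁, rfl, hb', by simp, rfl⟩

namespace FreeGroup

variable {X : Type*}

theorem mk_append (L₁ L₂ : List (X × Bool)) : mk (L₁ ++ L₂) = mk L₁ * mk L₂ :=
  mul_mk.symm

theorem mk_cons_true (x : X) (L : List (X × Bool)) : mk ((x, true) :: L) = of x * mk L :=
  mk_append [(x, true)] L

theorem mk_cons_false (x : X) (L : List (X × Bool)) :
    mk ((x, false) :: L) = (of x)⁻¹ * mk L := by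
  rw [← List.singleton_append, mk_append, of, inv_mk]
  rfl

theorem mk_invRev (L : List (X × Bool)) : mk (invRev L) = (mk L)⁻¹ :=
  inv_mk.symm

theorem exists_eq_append_cons_of_mk_eq_of {W : List (X × Bool)} {x : X} (h : mk W = of x) :
    ∃ G₀ G₁, W = G₀ ++ (x, true) :: G₁ ∧ mk G₀ = 1 ∧ mk G₁ = 1 := by
  obtain ⟨L, hW, hx⟩ := Red.exact.mp h
  obtain rfl := Red.singleton_iff.mp hx
  clear h
  induction hW using Relation.ReflTransGen.head_induction_on with
  | refl => exact ⟨[], [], rfl, rfl, rfl⟩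
  | head hstep _ ih =>
    obtain ⟨G₀, G₁, hW', h₀, h₁⟩ := ih
    obtain @⟨L₁, L₂, z, b⟩ := hstep
    have hpair (U V : List (X × Bool)) : mk (U ++ (z, b) :: (z, !b) :: V) = mk (U ++ V) :=
      Quot.sound Red.Step.not
    rcases List.append_eq_append_cons hW' with ⟨U₁, rfl, rfl⟩ | ⟨V₀, rfl, rfl⟩
    · exact ⟨G₀, U₁ ++ (z, b) :: (z, !b) :: L₂, by simp, h₀, by rwa [hpair]⟩
    · exact ⟨L₁ ++ (z, b) :: (z, !b) :: V₀, G₁, by simp, by rwa [hpair], h₁⟩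

def invConjWord (y : X) (c : List (X × Bool)) : List (X × Bool) :=
  invRev c ++ (y, false) :: c

def invConjsWord (A : List (X × List (X × Bool))) : List (X × Bool) :=
  A.flatMap fun p => invConjWord p.1 p.2

theorem mk_invConjWord (y : X) (c : List (X × Bool)) :
    mk (invConjWord y c) = (mk c)⁻¹ * (of y)⁻¹ * mk c := by
  simp only [invConjWord, mk_append, mk_invRev, mk_cons_false, mul_assoc]

theorem length_invConjWord (y : X) (c : List (X × Bool)) :
    (invConjWord y c).length = 2 * c.length + 1 := by
  simp only [invConjWord, List.length_append, List.length_cons, invRev_length]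
  omega

@[simp] theorem invConjsWord_nil : invConjsWord ([] : List (X × List (X × Bool))) = [] :=
  rfl

@[simp] theorem invConjsWord_cons (p : X × List (X × Bool)) (A : List (X × List (X × Bool))) :
    invConjsWord (p :: A) = invConjWord p.1 p.2 ++ invConjsWord A :=
  List.flatMap_cons

@[simp] theorem invConjsWord_append (A B : List (X × List (X × Bool))) :
    invConjsWord (A ++ B) = invConjsWord A ++ invConjsWord B :=
  List.flatMap_append

theorem invConjsWord_eq_append_cons {A : List (X × List (X × Bool))} {G₀ G₁ : List (X × Bool)}
    {m : X × Bool} (h : invConjsWord A = G₀ ++ m :: G₁) :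
    ∃ A₁ y c A₂ B₀ B₁, A = A₁ ++ (y, c) :: A₂ ∧ invConjWord y c = B₀ ++ m :: B₁ ∧
      G₀ = invConjsWord A₁ ++ B₀ ∧ G₁ = B₁ ++ invConjsWord A₂ := by
  obtain ⟨A₁, ⟨y, c⟩, A₂, B₀, B₁, rfl, hc, rfl, rfl⟩ := List.flatMap_eq_append_cons h
  exact ⟨A₁, y, c, A₂, B₀, B₁, rfl, hc, rfl, rfl⟩

theorem inv_mk_invConjsWord (A : List (X × List (X × Bool))) :
    (mk (invConjsWord A))⁻¹ = (A.reverse.map fun p => (mk p.2)⁻¹ * of p.1 * mk p.2).prod := by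
  induction A with
  | nil => exact inv_one
  | cons p A ih =>
    rw [invConjsWord_cons, mk_append, mul_inv_rev, ih, mk_invConjWord]
    simp only [List.reverse_cons, List.map_append, List.prod_append, List.map_singleton,
      List.prod_singleton]
    group

theorem quasiPositive_iff_exists_invConjsWord {g : FreeGroup X} :
    QuasiPositive g ↔ ∃ A, (mk (invConjsWord A))⁻¹ = g := by
  classical
  constructor
  · rintro ⟨l, rfl⟩
    refine ⟨(l.map fun p => (p.1, toWord p.2)).reverse, ?_⟩
    rw [inv_mk_invConjsWord]
    simp [Function.comp_def, mk_toWord, -inv_mk]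
  · rintro ⟨A, rfl⟩
    refine ⟨A.reverse.map fun p => (p.1, mk p.2), ?_⟩
    rw [inv_mk_invConjsWord]
    simp [Function.comp_def, -inv_mk]

theorem quasiPositive_of_mk_invConjsWord_append_eq_one {A : List (X × List (X × Bool))}
    {w : List (X × Bool)} (h : mk (invConjsWord A ++ w) = 1) : QuasiPositive (mk w) :=
  quasiPositive_iff_exists_invConjsWord.mpr
    ⟨A, (eq_inv_of_mul_eq_one_right (by rwa [mk_append] at h)).symm⟩

theorem quasiPositive_of_mk_append_invConjsWord_eq_one {M : List (X × List (X × Bool))}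
    {w : List (X × Bool)} (h : mk (w ++ invConjsWord M) = 1) : QuasiPositive (mk w) :=
  quasiPositive_iff_exists_invConjsWord.mpr
    ⟨M, (eq_inv_of_mul_eq_one_left (by rwa [mk_append] at h)).symm⟩

theorem exists_shorter_invConjWord {x y : X} {c B₀ B₁ : List (X × Bool)} {p s : FreeGroup X}
    (hc : invConjWord y c = B₀ ++ (x, true) :: B₁) (h₀ : p * mk B₀ = 1) (h₁ : mk B₁ * s = 1) :
    ∃ c', c'.length < c.length ∧
      (mk (invConjWord y c') * p * s = of x ∨ p * s * mk (invConjWord y c') = of x) := by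
  obtain rfl := eq_inv_of_mul_eq_one_left h₀
  obtain rfl := eq_inv_of_mul_eq_one_right h₁
  rcases List.append_eq_append_cons hc with ⟨U₁, hU, rfl⟩ | ⟨_ | ⟨_, c₀⟩, hV, rfl⟩
  · have hc : c = invRev U₁ ++ (x, false) :: invRev B₀ := by
      have h := congrArg invRev hU
      rw [invRev_invRev, invRev_append, invRev_cons] at h
      simpa [invRev] using h
    subst hc
    refine ⟨invRev U₁, by simp [invRev_length], .inr ?_⟩
    simp only [mk_invConjWord, mk_append, mk_cons_false, mk_invRev]
    group
  · simp at hV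
  · obtain ⟨rfl, rfl⟩ := List.cons_eq_cons.mp hV
    refine ⟨c₀, by simp, .inl ?_⟩
    simp only [List.append_eq, invConjWord, mk_append, mk_cons_false, mk_cons_true, mk_invRev]
    group

end FreeGroup

open FreeGroup

section

variable {X : Type*}

theorem quasiPositive_one : QuasiPositive (1 : FreeGroup X) :=
  ⟨[], rfl⟩

theorem QuasiPositive.conj {g : FreeGroup X} (hg : QuasiPositive g) (c : FreeGroup X) :
    QuasiPositive (c⁻¹ * g * c) := by
  obtain ⟨l, rfl⟩ := hg
  refine ⟨l.map fun p => (p.1, p.2 * c), ?_⟩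
  induction l with
  | nil => simp
  | cons p l ih =>
    simp only [List.map_cons, List.prod_cons] at ih ⊢
    rw [← ih]
    group

theorem exists_quasiPositive_split_of_mk_eq_of (A M : List (X × List (X × Bool)))
    (ρ : List (X × Bool)) (x : X) (h : mk (invConjsWord A ++ ρ ++ invConjsWord M) = of x) :
    ∃ ρ₁ ρ₂, ρ = ρ₁ ++ (x, true) :: ρ₂ ∧ QuasiPositive (mk ρ₁) ∧ QuasiPositive (mk ρ₂) := by
  have descend (A₀ M₀ : List (X × List (X × Bool))) (y : X) (c c' : List (X × Bool))
      (hlt : c'.length < c.length)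
      (hlen : (invConjsWord A ++ ρ ++ invConjsWord M).length =
        (invConjsWord A₀ ++ ρ ++ invConjsWord M₀).length + (invConjWord y c).length)
      (h' : mk (invConjWord y c') * mk (invConjsWord A₀ ++ ρ ++ invConjsWord M₀) = of x ∨
        mk (invConjsWord A₀ ++ ρ ++ invConjsWord M₀) * mk (invConjWord y c') = of x) :
      ∃ ρ₁ ρ₂, ρ = ρ₁ ++ (x, true) :: ρ₂ ∧ QuasiPositive (mk ρ₁) ∧ QuasiPositive (mk ρ₂) := by
    rcases h' with h' | h'
    · exact exists_quasiPositive_split_of_mk_eq_of ((y, c') :: A₀) M₀ ρ x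
        (by simpa only [invConjsWord_cons, List.append_assoc, mk_append, mul_assoc] using h')
    · exact exists_quasiPositive_split_of_mk_eq_of A₀ (M₀ ++ [(y, c')]) ρ x
        (by simpa only [invConjsWord_append, invConjsWord_cons, invConjsWord_nil,
          List.append_nil, List.append_assoc, mk_append, mul_assoc] using h')
  obtain ⟨G₀, G₁, hW, h₀, h₁⟩ := exists_eq_append_cons_of_mk_eq_of h
  rcases List.append_eq_append_cons hW with ⟨U₁, hU, rfl⟩ | ⟨V₀, hV, rfl⟩
  · rcases List.append_eq_append_cons hU with ⟨U₁', hA, rfl⟩ | ⟨ρ₀, rfl, rfl⟩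
    · obtain ⟨A₁, y, c, A₂, B₀, B₁, rfl, hc, rfl, rfl⟩ := invConjsWord_eq_append_cons hA
      obtain ⟨c', hlt, h'⟩ := exists_shorter_invConjWord hc
        (p := mk (invConjsWord A₁)) (s := mk (invConjsWord A₂ ++ ρ ++ invConjsWord M))
        (by simpa only [mk_append] using h₀)
        (by simpa only [invConjsWord_append, List.append_assoc, mk_append] using h₁)
      refine descend (A₁ ++ A₂) M y c c' hlt (by simp; omega) ?_
      simpa only [invConjsWord_append, List.append_assoc, mk_append, mul_assoc] using h'
    · exact ⟨ρ₀, U₁, rfl, quasiPositive_of_mk_invConjsWord_append_eq_one h₀,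
        quasiPositive_of_mk_append_invConjsWord_eq_one h₁⟩
  · obtain ⟨M₁, y, c, M₂, B₀, B₁, rfl, hc, rfl, rfl⟩ := invConjsWord_eq_append_cons hV
    obtain ⟨c', hlt, h'⟩ := exists_shorter_invConjWord hc
      (p := mk (invConjsWord A ++ ρ ++ invConjsWord M₁)) (s := mk (invConjsWord M₂))
      (by simpa only [List.append_assoc, mk_append, mul_assoc] using h₀)
      (by simpa only [mk_append] using h₁)
    refine descend A (M₁ ++ M₂) y c c' hlt (by simp; omega) ?_
    simpa only [invConjsWord_append, List.append_assoc, mk_append, mul_assoc] using h'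
termination_by (invConjsWord A ++ ρ ++ invConjsWord M).length
decreasing_by all_goals simp [length_invConjWord] at *; omega

theorem exists_quasiPositive_split_of_mk_eq_mul {ρ : List (X × Bool)} {a b : FreeGroup X} {x : X}
    (ha : QuasiPositive a) (hb : QuasiPositive b) (h : mk ρ = a * of x * b) :
    ∃ ρ₁ ρ₂, ρ = ρ₁ ++ (x, true) :: ρ₂ ∧ QuasiPositive (mk ρ₁) ∧ QuasiPositive (mk ρ₂) := by
  obtain ⟨A, rfl⟩ := quasiPositive_iff_exists_invConjsWord.mp ha
  obtain ⟨M, rfl⟩ := quasiPositive_iff_exists_invConjsWord.mp hb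
  refine exists_quasiPositive_split_of_mk_eq_of A M ρ x ?_
  rw [mk_append, mk_append, h]
  group

end

/-- A letter `(x, tt)` stands for `x` and `(x, ff)` stands for `x⁻¹`;
`FreeGroup.mk l` is the element of `F(X)` represented by the word `l`. -/
theorem good_matching_inverse_letter_exists {X : Type*}
    (l : List (X × Bool)) (i : Fin l.length)
    (hneg : (l.get i).2 = false)
    (hqp : QuasiPositive (FreeGroup.mk l) ∨ FreeGroup.mk l = 1) :
    ∃ wL wR : List (X × Bool),
      l.drop i ++ l.take i = l.get i :: (wL ++ ((l.get i).1, true) :: wR) ∧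
      QuasiPositive (FreeGroup.mk wL) ∧ QuasiPositive (FreeGroup.mk wR) := by
  set x := (l.get i).1
  have hx : l.get i = (x, false) := Prod.ext rfl hneg
  have hdrop : l.drop i = (x, false) :: l.drop (i + 1) := by
    rw [← hx, List.get_eq_getElem, List.drop_eq_getElem_cons]
  have hl : QuasiPositive (mk l) := hqp.elim id fun h => h ▸ quasiPositive_one
  have hrot : mk (l.drop (i + 1) ++ l.take i) =
      1 * of x * ((mk (l.take i))⁻¹ * mk l * mk (l.take i)) := by
    have hsplit : mk l = mk (l.take i) * ((of x)⁻¹ * mk (l.drop (i + 1))) := by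
      rw [← mk_cons_false, ← hdrop, ← mk_append, List.take_append_drop]
    rw [hsplit, mk_append]
    group
  obtain ⟨wL, wR, hsplit, hL, hR⟩ :=
    exists_quasiPositive_split_of_mk_eq_mul quasiPositive_one (hl.conj _) hrot
  exact ⟨wL, wR, by rw [hdrop, hx, List.cons_append, hsplit], hL, hR⟩
end

section
/- If w = t x⁻¹ u x v in F(X) with x ∈ X and both u and vt quasi-positive, then w is quasi-positive. -/
lemma QuasiPositive.mul {X : Type*} {a b : FreeGroup X}
    (ha : QuasiPositive a) (hb : QuasiPositive b) : QuasiPositive (a * b) := by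
  obtain ⟨l, rfl⟩ := ha; obtain ⟨m, rfl⟩ := hb
  exact ⟨l ++ m, by simp⟩

lemma QuasiPositive.conj_s14 {X : Type*} {a : FreeGroup X} (g : FreeGroup X)
    (ha : QuasiPositive a) : QuasiPositive (g⁻¹ * a * g) := by
  obtain ⟨l, rfl⟩ := ha
  refine ⟨l.map fun p => (p.1, p.2 * g), ?_⟩
  induction l with
  | nil => simp
  | cons p l ih =>
    simp only [List.map_cons, List.prod_cons, mul_inv_rev] at *
    calc g⁻¹ * (p.2⁻¹ * FreeGroup.of p.1 * p.2 *
          (List.map (fun p => p.2⁻¹ * FreeGroup.of p.1 * p.2) l).prod) * g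
        = (g⁻¹ * p.2⁻¹ * FreeGroup.of p.1 * (p.2 * g)) *
          (g⁻¹ * (List.map (fun p => p.2⁻¹ * FreeGroup.of p.1 * p.2) l).prod * g) := by
          group
      _ = _ := by rw [ih]

theorem quasiPositive_of_split {X : Type*} (w t u v : FreeGroup X) (x : X)
    (hw : w = t * (FreeGroup.of x)⁻¹ * u * FreeGroup.of x * v)
    (hu : QuasiPositive u) (hvt : QuasiPositive (v * t)) :
    QuasiPositive w := by
  have h1 : QuasiPositive ((FreeGroup.of x)⁻¹ * u * FreeGroup.of x) :=
    hu.conj_s14 (FreeGroup.of x)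
  have h2 : QuasiPositive (v * t * ((FreeGroup.of x)⁻¹ * u * FreeGroup.of x)) :=
    hvt.mul h1
  have h3 := h2.conj_s14 v
  have : v⁻¹ * (v * t * ((FreeGroup.of x)⁻¹ * u * FreeGroup.of x)) * v = w := by
    rw [hw]; group
  rwa [this] at h3
end
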